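/- arXiv:1504.01638 — 2 statements merged into one kernel-verified Lean document; each statement's English description precedes it below -/
import Mathlib

section
/- Let C* > 0, let θ := C*/(C*+1) ∈ (0,1), let d ≥ 2 and m ≥ 3 be an even integer satisfying 1 − 2^{5−3d} B/m² > 1/2, where B := Σ_{k=1}^∞ θ^k (2k−1)^{3d−5}. Suppose (E_j)_{j≥1} is a family of nonnegative reals indexed by odd multiples of m' := m/2, i.e. E_{(2p+1)m'} for p ≥ 0, with E_{(2p+1)m'} = 0 for p large, E_{m'} ≥ E_{(2p+1)m'} for all p, and satisfying for all p ≥ 0: E_{(2p+1)m'} ≤ C* ( ((2p+1)m')^{d−1} + E_{(2p+3)m'} − E_{(2p+1)m'} + ((2p+1)m')^{3d−5}/m^{3d−3} · E_{m'} ). Then E_{m'} ≤ 2^{2−d} A m^{d−1}, where A := Σ_{k=1}^∞ θ^k (2k−1)^{d−1}. -/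
/-!
Solving each step of the recursion for `E p` gives `E p ≤ θ (X p + E (p + 1))` with
`θ = C*/(C*+1) < 1`, where `X p` collects the two source terms. Unrolling this down to an index
where `E` vanishes bounds `E_{m'}` by `∑ θ^(p+1) X p`. The first source term contributes
`A (m/2)^(d-1)`; the second, linear in `E_{m'}`, contributes
`2^(5-3d) B / m² · E_{m'} < E_{m'} / 2`, which is absorbed into the left-hand side at the cost
of a factor `2`.
-/

open Finset

section OrderedField

variable {K : Type*} [Field K] [LinearOrder K] [IsStrictOrderedRing K]

lemma le_div_add_one_mul_of_le_mul_add_sub {C e e' x : K} (hC : 0 ≤ C)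
    (h : e ≤ C * (x + e' - e)) :
    e ≤ C / (C + 1) * (x + e') := by
  rw [div_mul_eq_mul_div, le_div_iff₀ (by positivity)]
  linarith

lemma le_sum_geometric_add_of_le_mul_add_succ {θ : K} {E X : ℕ → K} (hθ : 0 ≤ θ)
    (h : ∀ p, E p ≤ θ * (X p + E (p + 1))) (n : ℕ) :
    E 0 ≤ ∑ p ∈ range n, θ ^ (p + 1) * X p + θ ^ n * E n := by
  induction n with
  | zero => simp
  | succ n ih =>
    calc E 0 ≤ ∑ p ∈ range n, θ ^ (p + 1) * X p + θ ^ n * E n := ih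
      _ ≤ ∑ p ∈ range n, θ ^ (p + 1) * X p + θ ^ n * (θ * (X n + E (n + 1))) := by
        gcongr; exact h n
      _ = ∑ p ∈ range (n + 1), θ ^ (p + 1) * X p + θ ^ (n + 1) * E (n + 1) := by
        rw [sum_range_succ]; ring

end OrderedField

lemma summable_pow_succ_mul_two_mul_add_one_pow {θ : ℝ} (hθ₀ : 0 ≤ θ) (hθ₁ : θ < 1) (j : ℕ) :
    Summable fun k : ℕ => θ ^ (k + 1) * (2 * (k : ℝ) + 1) ^ j := by
  have hshift : Summable fun k : ℕ => ((k + 1 : ℕ) : ℝ) ^ j * θ ^ (k + 1) :=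
    (summable_nat_add_iff (f := fun n : ℕ => (n : ℝ) ^ j * θ ^ n) 1).mpr <|
      summable_pow_mul_geometric_of_norm_lt_one j (by rwa [Real.norm_of_nonneg hθ₀])
  refine (hshift.mul_left (2 ^ j)).of_nonneg_of_le (fun k => by positivity) fun k => ?_
  calc θ ^ (k + 1) * (2 * (k : ℝ) + 1) ^ j ≤ θ ^ (k + 1) * (2 * ((k : ℝ) + 1)) ^ j := by
        gcongr; linarith
    _ = 2 ^ j * (((k + 1 : ℕ) : ℝ) ^ j * θ ^ (k + 1)) := by push_cast; rw [mul_pow]; ring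

lemma div_two_pow_div_pow_eq_two_zpow_div_sq (x : ℝ) {d : ℕ} (hd : 2 ≤ d) :
    (x / 2) ^ (3 * d - 5) / x ^ (3 * d - 3) = (2 : ℝ) ^ ((5 : ℤ) - 3 * d) / x ^ 2 := by
  obtain ⟨k, rfl⟩ := Nat.exists_eq_add_of_le hd
  rcases eq_or_ne x 0 with rfl | hx
  · simp [show 3 * (2 + k) - 5 = 3 * k + 1 by omega]
  rw [show 3 * (2 + k) - 3 = 3 * (2 + k) - 5 + 2 by omega, pow_add, div_pow,
    show (5 : ℤ) - 3 * ((2 + k : ℕ) : ℤ) = -((3 * (2 + k) - 5 : ℕ) : ℤ) by push_cast; omega,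
    zpow_neg, zpow_natCast]
  field_simp

lemma two_mul_div_two_pow_eq (x : ℝ) {d : ℕ} (hd : 1 ≤ d) :
    2 * (x / 2) ^ (d - 1) = (2 : ℝ) ^ ((2 : ℤ) - d) * x ^ (d - 1) := by
  rw [show (2 : ℤ) - d = 1 - ((d - 1 : ℕ) : ℤ) by push_cast [hd]; ring, zpow_sub₀ two_ne_zero,
    zpow_natCast, div_pow]
  ring

theorem stmt_7_general (Cstar : ℝ) (hCstar : 0 < Cstar) (d : ℕ) (hd : 2 ≤ d)
    (m : ℕ)
    (A B : ℝ)
    (hA : A = ∑' k : ℕ, (Cstar / (Cstar + 1)) ^ (k + 1) * (2 * (k : ℝ) + 1) ^ (d - 1))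
    (hB : B = ∑' k : ℕ, (Cstar / (Cstar + 1)) ^ (k + 1) * (2 * (k : ℝ) + 1) ^ (3 * d - 5))
    (hsmall : 1 - (2 : ℝ) ^ ((5 : ℤ) - 3 * d) * B / (m : ℝ) ^ 2 > 1 / 2)
    (E : ℕ → ℝ) (hnn : ∀ p, 0 ≤ E p)
    (hzero : ∃ P : ℕ, ∀ p, P ≤ p → E p = 0)
    (hrec : ∀ p : ℕ, E p ≤ Cstar * (((2 * (p : ℝ) + 1) * ((m : ℝ) / 2)) ^ (d - 1)
        + E (p + 1) - E p
        + ((2 * (p : ℝ) + 1) * ((m : ℝ) / 2)) ^ (3 * d - 5) / (m : ℝ) ^ (3 * d - 3) * E 0)) :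
    E 0 ≤ (2 : ℝ) ^ ((2 : ℤ) - d) * A * (m : ℝ) ^ (d - 1) := by
  obtain ⟨P, hP⟩ := hzero
  set θ := Cstar / (Cstar + 1)
  have hθ₀ : 0 ≤ θ := by positivity
  have hθ₁ : θ < 1 := (div_lt_one (by positivity)).mpr (lt_add_one Cstar)
  set a := ((m : ℝ) / 2) ^ (d - 1)
  set c := ((m : ℝ) / 2) ^ (3 * d - 5) / (m : ℝ) ^ (3 * d - 3) * E 0
  let w : ℕ → ℕ → ℝ := fun j p => θ ^ (p + 1) * (2 * (p : ℝ) + 1) ^ j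
  have hstep : ∀ p, E p ≤ θ * (((2 * (p : ℝ) + 1) ^ (d - 1) * a
      + (2 * (p : ℝ) + 1) ^ (3 * d - 5) * c) + E (p + 1)) := fun p =>
    le_div_add_one_mul_of_le_mul_add_sub
      (x := (2 * (p : ℝ) + 1) ^ (d - 1) * a + (2 * (p : ℝ) + 1) ^ (3 * d - 5) * c) hCstar.le
      ((hrec p).trans_eq (by simp only [a, c, mul_pow]; ring))
  have hunrolled := le_sum_geometric_add_of_le_mul_add_succ hθ₀ hstep P
  rw [hP P le_rfl, mul_zero, add_zero] at hunrolled
  have hpartial : ∀ j, ∑ p ∈ range P, w j p ≤ ∑' p, w j p := fun j =>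
    (summable_pow_succ_mul_two_mul_add_one_pow hθ₀ hθ₁ j).sum_le_tsum _
      fun p _ => by positivity
  have hfeedback : E 0 ≤ A * a + B * c := by
    calc E 0 ≤ (∑ p ∈ range P, w (d - 1) p) * a + (∑ p ∈ range P, w (3 * d - 5) p) * c := by
          simpa only [w, mul_add, sum_add_distrib, sum_mul, mul_assoc] using hunrolled
      _ ≤ A * a + B * c := by
          have := hnn 0
          gcongr
          exacts [hA ▸ hpartial _, hB ▸ hpartial _]
  have hBc : B * c = (2 : ℝ) ^ ((5 : ℤ) - 3 * d) * B / (m : ℝ) ^ 2 * E 0 := by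
    simp only [c, div_two_pow_div_pow_eq_two_zpow_div_sq _ hd]; ring
  have habsorbed : E 0 ≤ 2 * (A * a) := by nlinarith [hnn 0]
  calc E 0 ≤ 2 * (A * a) := habsorbed
    _ = (2 : ℝ) ^ ((2 : ℤ) - d) * A * (m : ℝ) ^ (d - 1) := by
      linear_combination A * two_mul_div_two_pow_eq (m : ℝ) (by omega : 1 ≤ d)

/-- downward induction a priori bound. Writing E p for E_{(2p+1)m'}
with m' = m/2, the Saint-Venant recursion plus eventual vanishing and maximality
of E 0 yield E_{m'} ≤ 2^{2−d} A m^{d−1}. -/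
theorem stmt_7 (Cstar : ℝ) (hCstar : 0 < Cstar) (d : ℕ) (hd : 2 ≤ d)
    (m : ℕ) (hm3 : 3 ≤ m) (hmeven : Even m)
    (A B : ℝ)
    (hA : A = ∑' k : ℕ, (Cstar / (Cstar + 1)) ^ (k + 1) * (2 * (k : ℝ) + 1) ^ (d - 1))
    (hB : B = ∑' k : ℕ, (Cstar / (Cstar + 1)) ^ (k + 1) * (2 * (k : ℝ) + 1) ^ (3 * d - 5))
    (hsmall : 1 - (2 : ℝ) ^ ((5 : ℤ) - 3 * d) * B / (m : ℝ) ^ 2 > 1 / 2)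
    (E : ℕ → ℝ) (hnn : ∀ p, 0 ≤ E p)
    (hzero : ∃ P : ℕ, ∀ p, P ≤ p → E p = 0)
    (hmax : ∀ p, E p ≤ E 0)
    (hrec : ∀ p : ℕ, E p ≤ Cstar * (((2 * (p : ℝ) + 1) * ((m : ℝ) / 2)) ^ (d - 1)
        + E (p + 1) - E p
        + ((2 * (p : ℝ) + 1) * ((m : ℝ) / 2)) ^ (3 * d - 5) / (m : ℝ) ^ (3 * d - 3) * E 0)) :
    E 0 ≤ (2 : ℝ) ^ ((2 : ℤ) - d) * A * (m : ℝ) ^ (d - 1) :=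
  stmt_7_general Cstar hCstar d hd m A B hA hB hsmall E hnn hzero hrec
end

section
/- Let d ≥ 2, m ≥ 3, k ≥ m/2, and let y' ∈ ℝ^{d−1} with |y'| < k+1 (sup norm). Then there is C = C(d) with Σ_{j=1}^∞ (k + j(m−1))^{d−2} / (k + j(m−1) − |y'|)^d ≤ C (k+m−1)^{d−2} / ( m (k+m−1−|y'|)^{d−1} ). -/
/-!
With `T = k + m - 1`, `D = T - |y'|`, `M = m - 1`, the `j`-th term is `(T + jM)^n / (D + jM)^(n+2)`
with `n = d - 2`. Since `(T + jM) / (D + jM) ≤ T / D`, it is at most `(T/D)^n / (D + jM)^2`, and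
`1 / (D + jM)^2 ≤ (3/M) (1/(D + jM) - 1/(D + (j+1)M))` as soon as `M ≤ 2D`, which follows from
`|y'| < k + 1` and `m ≥ 3`. The series therefore telescopes to at most `(T/D)^n · 3 / (M D)`.
-/

open Finset

theorem tsum_le_of_le_sub_succ {f g : ℕ → ℝ} (hf : ∀ j, 0 ≤ f j) (hg : ∀ n, 0 ≤ g n)
    (hfg : ∀ j, f j ≤ g j - g (j + 1)) : ∑' j, f j ≤ g 0 :=
  Real.tsum_le_of_sum_range_le hf fun n => calc
    ∑ j ∈ range n, f j ≤ ∑ j ∈ range n, (g j - g (j + 1)) := sum_le_sum fun j _ => hfg j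
    _ = g 0 - g n := sum_range_sub' g n
    _ ≤ g 0 := sub_le_self _ (hg n)

theorem one_div_sq_le_mul_sub_one_div {P M c : ℝ} (hP : 0 < P) (hM : 0 < M)
    (h : P + M ≤ c * P) : 1 / P ^ 2 ≤ c / M * (1 / P - 1 / (P + M)) := by
  have hsub : c / M * (1 / P - 1 / (P + M)) = c / (P * (P + M)) := by
    field_simp
    ring
  rw [hsub, div_le_div_iff₀ (by positivity) (by positivity)]
  nlinarith

theorem pow_div_pow_add_two_le {T D x : ℝ} (n : ℕ) (hD : 0 < D) (hDT : D ≤ T) (hx : 0 ≤ x) :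
    (T + x) ^ n / (D + x) ^ (n + 2) ≤ (T / D) ^ n / (D + x) ^ 2 := by
  have hbase : T + x ≤ T / D * (D + x) := by
    rw [div_mul_eq_mul_div, le_div_iff₀ hD]
    nlinarith
  calc (T + x) ^ n / (D + x) ^ (n + 2)
      ≤ (T / D * (D + x)) ^ n / (D + x) ^ (n + 2) := by
        gcongr
        linarith
    _ = (T / D) ^ n / (D + x) ^ 2 := by
        rw [mul_pow, pow_add]
        field_simp

theorem tsum_pow_div_pow_add_two_le {T D M : ℝ} (n : ℕ) (hM : 0 < M) (hMD : M ≤ 2 * D)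
    (hDT : D ≤ T) :
    ∑' j : ℕ, (T + j * M) ^ n / (D + j * M) ^ (n + 2) ≤ 3 / M * T ^ n / D ^ (n + 1) := by
  have hD : 0 < D := by linarith
  have hT : 0 < T := by linarith
  have hP : ∀ j : ℕ, 0 < D + j * M := fun j => by positivity
  set g : ℕ → ℝ := fun j => (T / D) ^ n * (3 / M * (1 / (D + j * M)))
  have hg0 : g 0 = 3 / M * T ^ n / D ^ (n + 1) := by
    simp only [g, Nat.cast_zero, zero_mul, add_zero, div_pow, pow_succ]
    field_simp
  rw [← hg0]
  refine tsum_le_of_le_sub_succ (fun j => ?_) (fun j => ?_) (fun j => ?_)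
  · have := hP j
    positivity
  · have := hP j
    positivity
  · have hstep : D + j * M + M ≤ 3 * (D + j * M) := by
      nlinarith [(Nat.cast_nonneg j : (0 : ℝ) ≤ j)]
    calc (T + j * M) ^ n / (D + j * M) ^ (n + 2)
        ≤ (T / D) ^ n * (1 / (D + j * M) ^ 2) := by
          rw [mul_one_div]
          exact pow_div_pow_add_two_le n hD hDT (by positivity)
      _ ≤ (T / D) ^ n * (3 / M * (1 / (D + j * M) - 1 / (D + j * M + M))) :=
          mul_le_mul_of_nonneg_left (one_div_sq_le_mul_sub_one_div (hP j) hM hstep)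
            (by positivity)
      _ = g j - g (j + 1) := by
          simp only [g]
          push_cast
          ring

/-- summation of the annulus contributions:
Σ_{j≥1} (k+j(m−1))^{d−2}/(k+j(m−1)−|y'|)^d ≤ C (k+m−1)^{d−2}/(m (k+m−1−|y'|)^{d−1}). -/
theorem stmt_11 (d : ℕ) (hd : 2 ≤ d) :
    ∃ C : ℝ, 0 < C ∧ ∀ (m k : ℕ), 3 ≤ m → m ≤ 2 * k →
      ∀ y' : Fin (d - 1) → ℝ, ‖y'‖ < (k : ℝ) + 1 →
        (∑' j : ℕ, ((k : ℝ) + ((j : ℝ) + 1) * ((m : ℝ) - 1)) ^ (d - 2) /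
            ((k : ℝ) + ((j : ℝ) + 1) * ((m : ℝ) - 1) - ‖y'‖) ^ d)
          ≤ C * ((k : ℝ) + m - 1) ^ (d - 2) / ((m : ℝ) * ((k : ℝ) + m - 1 - ‖y'‖) ^ (d - 1)) := by
  obtain ⟨n, rfl⟩ : ∃ n, d = n + 2 := ⟨d - 2, by omega⟩
  refine ⟨5, by norm_num, fun m k hm _ y' hy => ?_⟩
  simp only [Nat.add_sub_cancel, show n + 2 - 1 = n + 1 from rfl]
  have hm' : (3 : ℝ) ≤ m := by exact_mod_cast hm
  have hM : (0 : ℝ) < m - 1 := by linarith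
  have hT : (k : ℝ) + m - 1 = k + (m - 1) := by ring
  have hD : 0 < (k : ℝ) + (m - 1) - ‖y'‖ := by linarith [norm_nonneg y']
  have hsum := tsum_pow_div_pow_add_two_le n (T := k + (m - 1)) (D := k + (m - 1) - ‖y'‖)
    (M := m - 1) hM (by linarith) (by linarith [norm_nonneg y'])
  calc _ = ∑' j : ℕ, ((k + (m - 1)) + j * (m - 1)) ^ n
          / ((k + (m - 1) - ‖y'‖) + j * ((m : ℝ) - 1)) ^ (n + 2) := by
        congr 1
        ext j
        ring
    _ ≤ 3 / (m - 1) * (k + (m - 1)) ^ n / (k + (m - 1) - ‖y'‖) ^ (n + 1) := hsum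
    _ ≤ _ := by
        have hcoef : 3 / ((m : ℝ) - 1) ≤ 5 / m := by
          rw [div_le_div_iff₀ hM (by positivity)]
          linarith
        rw [hT, mul_div_assoc, mul_div_mul_comm]
        gcongr
end
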